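/- Let f be a holomorphic generator on 𝔻 with Denjoy–Wolff point a = 0, i.e. f(z) = z·p(z) with p holomorphic and Re p ≥ 0 on 𝔻, and let ζ_1, …, ζ_N (N ≥ 1) be pairwise distinct boundary regular null points of f with f'(ζ_n) = ∠lim_{z→ζ_n} f(z)/(z − ζ_n) < 0 real (then necessarily f'(0) = p(0) satisfies Re f'(0) > 0). Set C = Re(1/f'(0)) − (1/2)·Σ_{n=1}^{N} 1/|f'(ζ_n)|. Then for all z ∈ 𝔻 with z ≠ 0: C·(1 − |z|)/(1 + |z|) ≤ | z·( 1/f(z) − Σ_{n=1}^{N} (1/|f'(ζ_n)|)·(1/(2z) − 1/(z − ζ_n)) ) − i·Im(1/f'(0)) | ≤ C·(1 + |z|)/(1 − |z|). -/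

import Mathlib

/-!
Put `q = 1/p`, so that `z/f(z) = q(z)`; `q` is holomorphic with `Re q ≥ 0`, and the angular
derivative `f'(ζₙ) = mₙ < 0` means that `(1 - r) q(r ζₙ) → 1/|mₙ|` radially. Letting `w → ζ` along
the radius in the Schwarz–Pick inequality for functions of nonnegative real part gives Julia's
lemma: if `(1 - r) q(r ζ) → c`, then `q - (c/2)(ζ + z)/(ζ - z)` still has nonnegative real part.
The kernel at `ζ'` is continuous at `ζ ≠ ζ'`, so it does not change the radial limit at `ζ`, and the
N kernels can be removed one at a time. What remains, `z (1/f(z) - Σ …)`, shifted by an imaginary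
constant, has nonnegative real part and the real value `C` at `0`, and Harnack's inequality (the
Schwarz–Pick inequality at `w = 0`) gives both bounds.
-/

open Complex Filter Metric Finset

noncomputable section

/-- The Stolz angle at a boundary point `ζ` with opening parameter `M`. -/
def StolzAngle (ζ : ℂ) (M : ℝ) : Set ℂ :=
  {z : ℂ | ‖z‖ < 1 ∧ ‖ζ - z‖ < M * (1 - ‖z‖)}

/-- Angular (nontangential) limit of `h` at `ζ` equals `L`: within every Stolz
angle `S(ζ, M)`, `M > 1`, the function tends to `L`. -/
def AngularLimit (h : ℂ → ℂ) (ζ : ℂ) (L : ℂ) : Prop :=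
  ∀ M : ℝ, 1 < M → Tendsto h (nhdsWithin ζ (StolzAngle ζ M)) (nhds L)

/-- Angular limit of `h` at `ζ` is `∞`: `|h|` tends to `+∞` within every Stolz angle. -/
def AngularLimitInfty (h : ℂ → ℂ) (ζ : ℂ) : Prop :=
  ∀ M : ℝ, 1 < M → Tendsto (fun z => ‖h z‖) (nhdsWithin ζ (StolzAngle ζ M)) atTop

open ComplexConjugate Topology

local notation "𝔻" => ball (0 : ℂ) 1

/-- Holomorphic functions on the unit disk with nonnegative real part (no normalization at `0`). -/
structure IsCaratheodory (q : ℂ → ℂ) : Prop where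
  differentiableOn : DifferentiableOn ℂ q 𝔻
  re_nonneg : ∀ z ∈ 𝔻, 0 ≤ (q z).re

def herglotzKernel (ζ z : ℂ) : ℂ := (ζ + z) / (ζ - z)

section Algebra

variable {a b w z : ℂ}

lemma normSq_add_conj (a b : ℂ) : normSq (a + conj b) = normSq (a - b) + 4 * a.re * b.re := by
  simp only [normSq_apply, add_re, add_im, sub_re, sub_im, conj_re, conj_im]; ring

lemma normSq_one_sub_conj_mul (z w : ℂ) :
    normSq (1 - conj w * z) = normSq (z - w) + (1 - normSq z) * (1 - normSq w) := by
  simp only [normSq_apply, sub_re, sub_im, one_re, one_im, mul_re, mul_im, conj_re, conj_im]; ring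

lemma normSq_sub_lt_normSq_one_sub_conj_mul (hz : ‖z‖ < 1) (hw : ‖w‖ < 1) :
    normSq (z - w) < normSq (1 - conj w * z) := by
  have hz' : normSq z < 1 := by rw [← Complex.sq_norm]; nlinarith [norm_nonneg z]
  have hw' : normSq w < 1 := by rw [← Complex.sq_norm]; nlinarith [norm_nonneg w]
  rw [normSq_one_sub_conj_mul]
  nlinarith

lemma ne_zero_of_normSq_lt (h : normSq a < normSq b) : b ≠ 0 :=
  normSq_pos.1 ((normSq_nonneg a).trans_lt h)

lemma norm_div_lt_one_of_normSq_lt (h : normSq a < normSq b) : ‖a / b‖ < 1 := by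
  rw [← sq_lt_one_iff₀ (norm_nonneg _), Complex.sq_norm, normSq_div,
    div_lt_one ((normSq_nonneg a).trans_lt h)]
  exact h

lemma norm_sub_div_one_sub_conj_mul_lt_one (hz : ‖z‖ < 1) (hw : ‖w‖ < 1) :
    ‖(z - w) / (1 - conj w * z)‖ < 1 :=
  norm_div_lt_one_of_normSq_lt (normSq_sub_lt_normSq_one_sub_conj_mul hz hw)

lemma norm_sub_div_add_conj_lt_one (ha : 0 < a.re) (hb : 0 < b.re) :
    ‖(a - b) / (a + conj b)‖ < 1 :=
  norm_div_lt_one_of_normSq_lt (by rw [normSq_add_conj]; nlinarith)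

lemma normSq_sub_mul_le_of_norm_div_le (ha : 0 < a.re) (hb : 0 < b.re) (hz : ‖z‖ < 1)
    (hw : ‖w‖ < 1) (h : ‖(a - b) / (a + conj b)‖ ≤ ‖(z - w) / (1 - conj w * z)‖) :
    normSq (a - b) * ((1 - normSq z) * (1 - normSq w)) ≤ 4 * a.re * b.re * normSq (z - w) := by
  have hab : 0 < normSq (a + conj b) := by rw [normSq_add_conj]; nlinarith [normSq_nonneg (a - b)]
  have hzw : 0 < normSq (1 - conj w * z) :=
    (normSq_nonneg _).trans_lt (normSq_sub_lt_normSq_one_sub_conj_mul hz hw)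
  have h2 := pow_le_pow_left₀ (norm_nonneg _) h 2
  rw [Complex.sq_norm, Complex.sq_norm, normSq_div, normSq_div, div_le_div_iff₀ hab hzw,
    normSq_add_conj, normSq_one_sub_conj_mul] at h2
  linarith

end Algebra

namespace IsCaratheodory

variable {q : ℂ → ℂ}

theorem eqOn_of_re_eq_zero (hq : IsCaratheodory q) {z₀ : ℂ} (hz₀ : z₀ ∈ 𝔻)
    (h0 : (q z₀).re = 0) : Set.EqOn q (fun _ ↦ q z₀) 𝔻 := by
  rcases (hq.differentiableOn.analyticOnNhd isOpen_ball).is_constant_or_isOpen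
    (convex_ball (0 : ℂ) 1).isPreconnected with ⟨w, hw⟩ | hopen
  · exact fun z hz ↦ (hw z hz).trans (hw z₀ hz₀).symm
  · -- by the open mapping theorem `q z₀ - ε / 2` would be a value of `q`
    obtain ⟨ε, hε, hsub⟩ := Metric.isOpen_iff.1 (hopen _ subset_rfl isOpen_ball) (q z₀)
      ⟨z₀, hz₀, rfl⟩
    obtain ⟨z, hz, hqz⟩ := hsub (show q z₀ - (ε / 2 : ℝ) ∈ ball (q z₀) ε by
      simp [abs_of_pos hε, hε])
    have := hq.re_nonneg z hz
    simp [hqz, h0] at this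
    linarith

theorem norm_sub_div_add_conj_le_of_re_pos (hd : DifferentiableOn ℂ q 𝔻)
    (hq : ∀ z ∈ 𝔻, 0 < (q z).re) {z w : ℂ} (hz : z ∈ 𝔻) (hw : w ∈ 𝔻) :
    ‖(q z - q w) / (q z + conj (q w))‖ ≤ ‖(z - w) / (1 - conj w * z)‖ := by
  rw [mem_ball_zero_iff] at hz hw
  have hφ_lt : ∀ u ∈ 𝔻, normSq (u + w) < normSq (1 + conj w * u) := fun u hu ↦ by
    simpa using normSq_sub_lt_normSq_one_sub_conj_mul (mem_ball_zero_iff.1 hu)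
      (w := -w) (by simpa using hw)
  set φ : ℂ → ℂ := fun u ↦ (u + w) / (1 + conj w * u)
  have hφ : Set.MapsTo φ 𝔻 𝔻 := fun u hu ↦
    mem_ball_zero_iff.2 (norm_div_lt_one_of_normSq_lt (hφ_lt u hu))
  have hφd : DifferentiableOn ℂ φ 𝔻 :=
    (differentiableOn_id.add_const w).div ((differentiableOn_id.const_mul _).const_add 1)
      fun u hu ↦ ne_zero_of_normSq_lt (hφ_lt u hu)
  have hden : ∀ u ∈ 𝔻, q (φ u) + conj (q w) ≠ 0 := fun u hu h ↦ by
    have := congrArg re h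
    simp only [add_re, conj_re, zero_re] at this
    linarith [hq _ (hφ hu), hq w (mem_ball_zero_iff.2 hw)]
  -- the Cayley-type map sending `q w` to `0` composed with the disk automorphism `φ`
  set G : ℂ → ℂ := fun u ↦ (q (φ u) - q w) / (q (φ u) + conj (q w))
  have hGd : DifferentiableOn ℂ G 𝔻 :=
    ((hd.comp hφd hφ).sub_const _).div ((hd.comp hφd hφ).add_const _) hden
  have hG : Set.MapsTo G 𝔻 (closedBall 0 1) := fun u hu ↦
    mem_closedBall_zero_iff.2 (norm_sub_div_add_conj_lt_one (hq _ (hφ hu))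
      (hq w (mem_ball_zero_iff.2 hw))).le
  set u₀ := (z - w) / (1 - conj w * z)
  have hu₀ : ‖u₀‖ < 1 := norm_sub_div_one_sub_conj_mul_lt_one hz hw
  have hφu₀ : φ u₀ = z := by
    have hne := ne_zero_of_normSq_lt (normSq_sub_lt_normSq_one_sub_conj_mul hz hw)
    have hu : u₀ * (1 - conj w * z) = z - w := div_mul_cancel₀ _ hne
    refine (div_eq_iff (ne_zero_of_normSq_lt (hφ_lt u₀ (mem_ball_zero_iff.2 hu₀)))).2 ?_
    linear_combination hu
  have := Complex.norm_le_norm_of_mapsTo_ball hGd hG (by simp [G, φ]) hu₀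
  simpa only [G, hφu₀] using this

/-- Schwarz–Pick inequality for functions of nonnegative real part. -/
theorem normSq_sub_mul_le (hq : IsCaratheodory q) {z w : ℂ} (hz : z ∈ 𝔻) (hw : w ∈ 𝔻) :
    normSq (q z - q w) * ((1 - normSq z) * (1 - normSq w))
      ≤ 4 * (q z).re * (q w).re * normSq (z - w) := by
  by_cases hpos : ∀ u ∈ 𝔻, 0 < (q u).re
  · exact normSq_sub_mul_le_of_norm_div_le (hpos z hz) (hpos w hw) (mem_ball_zero_iff.1 hz)
      (mem_ball_zero_iff.1 hw) (norm_sub_div_add_conj_le_of_re_pos hq.differentiableOn hpos hz hw)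
  · push Not at hpos
    obtain ⟨z₀, hz₀, hle⟩ := hpos
    have h0 := hq.re_nonneg z₀ hz₀
    have hconst := hq.eqOn_of_re_eq_zero hz₀ (le_antisymm hle h0)
    rw [hconst hz, hconst hw, sub_self, map_zero, zero_mul]
    exact mul_nonneg (by positivity) (normSq_nonneg _)

variable {ζ z : ℂ}

lemma normSq_radial_mul_le (hq : IsCaratheodory q) (hζ : ‖ζ‖ = 1) (hz : z ∈ 𝔻) {r : ℝ}
    (hr : r ∈ Set.Ioo 0 1) :
    normSq (((1 - r : ℝ) : ℂ) * q z - ((1 - r : ℝ) : ℂ) * q (r * ζ)) * (1 - normSq z) * (1 + r)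
      ≤ 4 * (q z).re * (((1 - r : ℝ) : ℂ) * q (r * ζ)).re * normSq (z - r * ζ) := by
  have hrζ : normSq (r * ζ) = r ^ 2 := by
    rw [normSq_mul, normSq_ofReal, ← Complex.sq_norm, hζ]; ring
  have hw : (r : ℂ) * ζ ∈ 𝔻 := by
    rw [mem_ball_zero_iff, norm_mul, hζ, mul_one, Complex.norm_real, Real.norm_of_nonneg hr.1.le]
    exact hr.2
  have hpick := hq.normSq_sub_mul_le hz hw
  rw [hrζ] at hpick
  calc normSq (((1 - r : ℝ) : ℂ) * q z - ((1 - r : ℝ) : ℂ) * q (r * ζ)) * (1 - normSq z) * (1 + r)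
      = (1 - r) * (normSq (q z - q (r * ζ)) * ((1 - normSq z) * (1 - r ^ 2))) := by
        rw [← mul_sub, normSq_mul, normSq_ofReal]; ring
    _ ≤ (1 - r) * (4 * (q z).re * (q (r * ζ)).re * normSq (z - r * ζ)) :=
        mul_le_mul_of_nonneg_left hpick (by linarith [hr.2])
    _ = _ := by rw [re_ofReal_mul]; ring

/-- The limiting case `w → ζ` of the Schwarz–Pick inequality along the radius: a Julia-type
inequality. -/
theorem sq_mul_le_of_tendsto (hq : IsCaratheodory q) (hζ : ‖ζ‖ = 1) {c : ℝ}
    (hlim : Tendsto (fun r : ℝ ↦ ((1 - r : ℝ) : ℂ) * q (r * ζ)) (𝓝[<] 1) (𝓝 c))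
    (hz : z ∈ 𝔻) :
    c ^ 2 * (1 - normSq z) ≤ 2 * c * (q z).re * normSq (z - ζ) := by
  set F : ℝ × ℂ → ℝ := fun x ↦ normSq (((1 - x.1 : ℝ) : ℂ) * q z - x.2) * (1 - normSq z) * (1 + x.1)
  set G : ℝ × ℂ → ℝ := fun x ↦ 4 * (q z).re * x.2.re * normSq (z - x.1 * ζ)
  have hpath : Tendsto (fun r : ℝ ↦ (r, ((1 - r : ℝ) : ℂ) * q (r * ζ))) (𝓝[<] 1) (𝓝 (1, c)) :=
    (tendsto_id.mono_left nhdsWithin_le_nhds).prodMk_nhds hlim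
  have hF : Continuous F := by fun_prop
  have hG : Continuous G := by fun_prop
  have hle := le_of_tendsto_of_tendsto ((hF.tendsto _).comp hpath) ((hG.tendsto _).comp hpath)
    (eventually_of_mem (Ioo_mem_nhdsLT one_pos) fun r hr ↦ hq.normSq_radial_mul_le hζ hz hr)
  simp only [F, G, sub_self, ofReal_zero, zero_mul, zero_sub, normSq_neg, normSq_ofReal,
    ofReal_re, ofReal_one, one_mul] at hle
  linarith

end IsCaratheodory

section HerglotzKernel

variable {ζ ζ' z : ℂ}

lemma sub_ne_zero_of_mem_ball (hζ : ‖ζ‖ = 1) (hz : z ∈ 𝔻) : ζ - z ≠ 0 := by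
  rw [sub_ne_zero]
  rintro rfl
  simp [hζ] at hz

lemma differentiableOn_herglotzKernel (hζ : ‖ζ‖ = 1) : DifferentiableOn ℂ (herglotzKernel ζ) 𝔻 :=
  (differentiableOn_id.const_add ζ).div (differentiableOn_id.const_sub ζ)
    fun _ hz ↦ sub_ne_zero_of_mem_ball hζ hz

lemma re_herglotzKernel (hζ : ‖ζ‖ = 1) (z : ℂ) :
    (herglotzKernel ζ z).re = (1 - normSq z) / normSq (ζ - z) := by
  have hζ' : ζ.re * ζ.re + ζ.im * ζ.im = 1 := by
    rw [← normSq_apply, ← Complex.sq_norm, hζ, one_pow]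
  rw [herglotzKernel, div_re, ← add_div]
  congr 1
  simp only [add_re, add_im, sub_re, sub_im, normSq_apply]
  linear_combination hζ'

lemma herglotzKernel_zero (hζ : ζ ≠ 0) : herglotzKernel ζ 0 = 1 := by
  simp [herglotzKernel, hζ]

lemma herglotzKernel_div_two_eq (hz : z ≠ 0) (hzζ : z ≠ ζ) :
    herglotzKernel ζ z / 2 = z * (1 / (2 * z) - 1 / (z - ζ)) := by
  have : ζ - z ≠ 0 := sub_ne_zero.2 hzζ.symm
  have : z - ζ ≠ 0 := sub_ne_zero.2 hzζ
  rw [herglotzKernel]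
  field_simp
  ring

lemma mul_one_div_sub_sum_eq {ι : Type*} (s : Finset ι) (w : ℂ) {ζ : ι → ℂ} (a : ι → ℝ)
    (hz : z ∈ 𝔻) (hz0 : z ≠ 0) (hζ : ∀ i ∈ s, ‖ζ i‖ = 1) :
    z * (1 / (z * w) - ∑ i ∈ s, (1 / (a i : ℂ)) * (1 / (2 * z) - 1 / (z - ζ i)))
      = w⁻¹ - ∑ i ∈ s, (((a i)⁻¹ / 2 : ℝ) : ℂ) * herglotzKernel (ζ i) z := by
  rw [mul_sub, Finset.mul_sum]
  congr 1
  · field_simp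
  · refine Finset.sum_congr rfl fun i hi ↦ ?_
    have hzζ : z ≠ ζ i := fun h ↦ sub_ne_zero_of_mem_ball (hζ i hi) hz (sub_eq_zero.2 h.symm)
    rw [mul_left_comm, ← herglotzKernel_div_two_eq hz0 hzζ]
    push_cast
    ring

lemma tendsto_one_sub_mul_herglotzKernel (h : ζ' ≠ ζ) :
    Tendsto (fun r : ℝ ↦ ((1 - r : ℝ) : ℂ) * herglotzKernel ζ' (r * ζ)) (𝓝[<] 1) (𝓝 0) := by
  have hcont : ContinuousAt (fun r : ℝ ↦ ((1 - r : ℝ) : ℂ) * herglotzKernel ζ' (r * ζ)) 1 := by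
    unfold herglotzKernel
    refine ContinuousAt.mul (by fun_prop) (ContinuousAt.div (by fun_prop) (by fun_prop) ?_)
    simpa [sub_eq_zero] using h
  simpa using hcont.tendsto.mono_left nhdsWithin_le_nhds

end HerglotzKernel

namespace IsCaratheodory

variable {q : ℂ → ℂ}

theorem inv (hq : IsCaratheodory q) : IsCaratheodory fun z ↦ (q z)⁻¹ where
  differentiableOn := by
    by_cases h : ∃ z₀ ∈ 𝔻, q z₀ = 0
    · obtain ⟨z₀, hz₀, h0⟩ := h
      have hconst := hq.eqOn_of_re_eq_zero hz₀ (by simp [h0])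
      exact (differentiableOn_const 0).congr fun z hz ↦ by simp [hconst hz, h0]
    · push Not at h
      exact hq.differentiableOn.inv h
  re_nonneg z hz := by
    rw [inv_re]
    exact div_nonneg (hq.re_nonneg z hz) (normSq_nonneg _)

theorem sub_const (hq : IsCaratheodory q) {a : ℂ} (ha : a.re ≤ 0) :
    IsCaratheodory fun z ↦ q z - a where
  differentiableOn := hq.differentiableOn.sub_const a
  re_nonneg z hz := by
    rw [sub_re]
    linarith [hq.re_nonneg z hz]

/-- Julia's lemma for functions of nonnegative real part. -/
theorem sub_herglotzKernel (hq : IsCaratheodory q) {ζ : ℂ} (hζ : ‖ζ‖ = 1) {c : ℝ} (hc : 0 ≤ c)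
    (hlim : Tendsto (fun r : ℝ ↦ ((1 - r : ℝ) : ℂ) * q (r * ζ)) (𝓝[<] 1) (𝓝 c)) :
    IsCaratheodory fun z ↦ q z - ((c / 2 : ℝ) : ℂ) * herglotzKernel ζ z where
  differentiableOn := hq.differentiableOn.sub ((differentiableOn_herglotzKernel hζ).const_mul _)
  re_nonneg z hz := by
    have hpos : 0 < normSq (ζ - z) := normSq_pos.2 (sub_ne_zero_of_mem_ball hζ hz)
    have hjulia := hq.sq_mul_le_of_tendsto hζ hlim hz
    rw [← normSq_neg (z - ζ), neg_sub] at hjulia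
    rw [sub_re, re_ofReal_mul, re_herglotzKernel hζ, sub_nonneg, ← mul_div_assoc,
      div_le_iff₀ hpos]
    rcases hc.eq_or_lt with rfl | hc
    · simpa using (mul_nonneg (hq.re_nonneg z hz) hpos.le)
    · nlinarith

theorem sub_sum_herglotzKernel {ι : Type*} (hq : IsCaratheodory q) {ζ : ι → ℂ} {c : ι → ℝ}
    (s : Finset ι) (hinj : Set.InjOn ζ s) (hζ : ∀ i ∈ s, ‖ζ i‖ = 1) (hc : ∀ i ∈ s, 0 ≤ c i)
    (hlim : ∀ i ∈ s,
      Tendsto (fun r : ℝ ↦ ((1 - r : ℝ) : ℂ) * q (r * ζ i)) (𝓝[<] 1) (𝓝 (c i))) :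
    IsCaratheodory fun z ↦ q z - ∑ i ∈ s, ((c i / 2 : ℝ) : ℂ) * herglotzKernel (ζ i) z := by
  classical
  induction s using Finset.induction_on with
  | empty => simpa using hq
  | insert j s hj ih =>
    have ih := ih (hinj.mono (subset_insert j s)) (fun i hi ↦ hζ i (mem_insert_of_mem hi))
      (fun i hi ↦ hc i (mem_insert_of_mem hi)) (fun i hi ↦ hlim i (mem_insert_of_mem hi))
    have hne : ∀ i ∈ s, ζ j ≠ ζ i := fun i hi h ↦
      hj (hinj (mem_insert_of_mem hi) (mem_insert_self j s) h.symm ▸ hi)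
    have hlim_j : Tendsto (fun r : ℝ ↦ ((1 - r : ℝ) : ℂ) *
        (q (r * ζ j) - ∑ i ∈ s, ((c i / 2 : ℝ) : ℂ) * herglotzKernel (ζ i) (r * ζ j)))
        (𝓝[<] 1) (𝓝 (c j)) := by
      have hsum := tendsto_finsetSum s fun i hi ↦
        (tendsto_one_sub_mul_herglotzKernel (hne i hi).symm).const_mul ((c i / 2 : ℝ) : ℂ)
      simpa [mul_sub, Finset.mul_sum, mul_left_comm] using
        (hlim j (mem_insert_self j s)).sub hsum
    convert ih.sub_herglotzKernel (hζ j (mem_insert_self j s)) (hc j (mem_insert_self j s))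
      hlim_j using 2 with z
    rw [sum_insert hj]
    ring

theorem harnack {g : ℂ → ℂ} (hg : IsCaratheodory g) {C : ℝ} (hg0 : g 0 = C)
    {z : ℂ} (hz : z ∈ 𝔻) :
    C * ((1 - ‖z‖) / (1 + ‖z‖)) ≤ ‖g z‖ ∧ ‖g z‖ ≤ C * ((1 + ‖z‖) / (1 - ‖z‖)) := by
  have hz' : ‖z‖ < 1 := mem_ball_zero_iff.1 hz
  have hC : 0 ≤ C := by simpa [hg0] using hg.re_nonneg 0 (mem_ball_self one_pos)
  have hpick := hg.normSq_sub_mul_le hz (mem_ball_self one_pos)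
  rw [hg0, normSq_zero, sub_zero, sub_zero, ofReal_re, mul_one] at hpick
  -- Schwarz–Pick at `w = 0` says `‖g z - C‖ ≤ ‖z‖ * ‖g z + C‖`
  have hsq : ‖g z - C‖ ^ 2 ≤ (‖z‖ * ‖g z + C‖) ^ 2 := by
    have := normSq_add_conj (g z) C
    rw [conj_ofReal, ofReal_re] at this
    rw [mul_pow, Complex.sq_norm, Complex.sq_norm, Complex.sq_norm, this]
    nlinarith
  have hk := (pow_le_pow_iff_left₀ (norm_nonneg _) (by positivity) two_ne_zero).1 hsq
  have hnormC : ‖(C : ℂ)‖ = C := by rw [Complex.norm_real, Real.norm_of_nonneg hC]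
  have h1 := norm_add_le (g z) C
  have h2 := norm_sub_norm_le (g z) C
  have h3 := norm_sub_norm_le (C : ℂ) (g z)
  rw [norm_sub_rev (C : ℂ)] at h3
  rw [hnormC] at h1 h2 h3
  have hk' : ‖g z - C‖ ≤ ‖z‖ * (‖g z‖ + C) := hk.trans (by gcongr)
  constructor
  · rw [← mul_div_assoc, div_le_iff₀ (by linarith [norm_nonneg z])]
    nlinarith
  · rw [← mul_div_assoc, le_div_iff₀ (by linarith)]
    nlinarith

end IsCaratheodory

theorem AngularLimit.tendsto_radial {h : ℂ → ℂ} {ζ L : ℂ} (hL : AngularLimit h ζ L)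
    (hζ : ‖ζ‖ = 1) : Tendsto (fun r : ℝ ↦ h (r * ζ)) (𝓝[<] 1) (𝓝 L) := by
  refine (hL 2 one_lt_two).comp (tendsto_nhdsWithin_iff.2 ⟨?_, ?_⟩)
  · simpa using ((continuous_ofReal.mul continuous_const).tendsto (1 : ℝ)).mono_left
      (nhdsWithin_le_nhds (s := Set.Iio 1)) (f := fun r : ℝ ↦ (r : ℂ) * ζ)
  · filter_upwards [Ioo_mem_nhdsLT one_pos] with r hr
    have hnorm : ‖(r : ℂ) * ζ‖ = r := by
      rw [norm_mul, hζ, mul_one, Complex.norm_real, Real.norm_of_nonneg hr.1.le]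
    have hdist : ‖ζ - r * ζ‖ = 1 - r := by
      rw [← one_sub_mul, ← ofReal_one, ← ofReal_sub, norm_mul, hζ, mul_one, Complex.norm_real,
        Real.norm_of_nonneg (by linarith [hr.2])]
    refine ⟨by rw [hnorm]; exact hr.2, ?_⟩
    rw [hdist, hnorm]
    linarith [hr.2]

theorem tendsto_one_sub_mul_inv_of_angularLimit {p f : ℂ → ℂ} (hf : ∀ z, f z = z * p z)
    {ζ L : ℂ} (hζ : ‖ζ‖ = 1) (hL : L ≠ 0) (hder : AngularLimit (fun z ↦ f z / (z - ζ)) ζ L) :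
    Tendsto (fun r : ℝ ↦ ((1 - r : ℝ) : ℂ) * (p (r * ζ))⁻¹) (𝓝[<] 1) (𝓝 (-L⁻¹)) := by
  have hlim := ((hder.tendsto_radial hζ).inv₀ hL).mul
    ((continuous_ofReal.tendsto (1 : ℝ)).mono_left (nhdsWithin_le_nhds (s := Set.Iio 1))).neg
  rw [ofReal_one, mul_neg_one] at hlim
  refine hlim.congr' (eventually_of_mem (Ioo_mem_nhdsLT one_pos) fun r hr ↦ ?_)
  have hζ0 : ζ ≠ 0 := by rintro rfl; simp at hζ
  have hr0 : (r : ℂ) ≠ 0 := ofReal_ne_zero.2 hr.1.ne'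
  have hr1 : (r : ℂ) - 1 ≠ 0 := by
    rw [sub_ne_zero, Ne, ← ofReal_one, ofReal_inj]; exact hr.2.ne
  have hrζ : (r : ℂ) * ζ - ζ ≠ 0 := by rw [← sub_one_mul]; exact mul_ne_zero hr1 hζ0
  simp only [hf]
  rcases eq_or_ne (p (r * ζ)) 0 with hp0 | hp0
  · simp [hp0]
  · push_cast
    field_simp
    ring

theorem stmt12_general (N : ℕ) (p f : ℂ → ℂ)
    (hp : DifferentiableOn ℂ p (ball (0:ℂ) 1))
    (hre : ∀ z ∈ ball (0:ℂ) 1, 0 ≤ (p z).re)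
    (hf : ∀ z, f z = z * p z)
    (ζ : Fin N → ℂ) (hinj : Function.Injective ζ)
    (hζ : ∀ n, ‖ζ n‖ = 1)
    (m : Fin N → ℝ) (hm : ∀ n, m n < 0)
    (hder : ∀ n, AngularLimit (fun z => f z / (z - ζ n)) (ζ n) ((m n : ℝ) : ℂ))
    (C : ℝ) (hC : C = (1 / p 0).re - (1 / 2) * ∑ n, 1 / |m n|) :
    ∀ z ∈ ball (0:ℂ) 1, z ≠ 0 →
      C * ((1 - ‖z‖) / (1 + ‖z‖)) ≤
        ‖z * (1 / f z
            - ∑ n, (1 / ((|m n| : ℝ) : ℂ)) * (1 / (2 * z) - 1 / (z - ζ n)))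
          - Complex.I * (((1 / p 0).im : ℝ) : ℂ)‖ ∧
      ‖z * (1 / f z
            - ∑ n, (1 / ((|m n| : ℝ) : ℂ)) * (1 / (2 * z) - 1 / (z - ζ n)))
          - Complex.I * (((1 / p 0).im : ℝ) : ℂ)‖ ≤
        C * ((1 + ‖z‖) / (1 - ‖z‖)) := by
  intro z hz hz0
  set g : ℂ → ℂ := fun w ↦ (p w)⁻¹ - ∑ n, ((|m n|⁻¹ / 2 : ℝ) : ℂ) * herglotzKernel (ζ n) w
    - I * ((1 / p 0).im : ℂ)
  have hlim : ∀ n, Tendsto (fun r : ℝ ↦ ((1 - r : ℝ) : ℂ) * (p (r * ζ n))⁻¹) (𝓝[<] 1)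
      (𝓝 ((|m n|⁻¹ : ℝ) : ℂ)) := fun n ↦ by
    convert tendsto_one_sub_mul_inv_of_angularLimit hf (hζ n)
      (ofReal_ne_zero.2 (hm n).ne) (hder n) using 2
    rw [abs_of_neg (hm n)]
    push_cast
    rw [inv_neg]
  have hg : IsCaratheodory g :=
    ((IsCaratheodory.inv ⟨hp, hre⟩).sub_sum_herglotzKernel univ hinj.injOn (fun n _ ↦ hζ n)
      (fun n _ ↦ by positivity) fun n _ ↦ hlim n).sub_const (by simp)
  have hg0 : g 0 = C := by
    simp only [g, herglotzKernel_zero (norm_ne_zero_iff.1 ((hζ _).trans_ne one_ne_zero)), mul_one]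
    simp only [one_div] at hC ⊢
    apply Complex.ext
    · rw [hC, ← ofReal_sum]
      simp only [sub_re, ofReal_re, mul_re, I_re, I_im, ofReal_im, Finset.mul_sum, div_eq_inv_mul]
      ring
    · simp
  rw [hf, mul_one_div_sub_sum_eq univ (p z) _ hz hz0 fun n _ ↦ hζ n]
  exact hg.harnack hg0 hz

/-- Theorem `t.dd`: a two-sided distortion estimate in the
dilation case. -/
theorem stmt12 (N : ℕ) (hN : 1 ≤ N) (p f : ℂ → ℂ)
    (hp : DifferentiableOn ℂ p (ball (0:ℂ) 1))
    (hre : ∀ z ∈ ball (0:ℂ) 1, 0 ≤ (p z).re)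
    (hf : ∀ z, f z = z * p z)
    (ζ : Fin N → ℂ) (hinj : Function.Injective ζ)
    (hζ : ∀ n, ‖ζ n‖ = 1)
    (m : Fin N → ℝ) (hm : ∀ n, m n < 0)
    (hder : ∀ n, AngularLimit (fun z => f z / (z - ζ n)) (ζ n) ((m n : ℝ) : ℂ))
    (C : ℝ) (hC : C = (1 / p 0).re - (1 / 2) * ∑ n, 1 / |m n|) :
    ∀ z ∈ ball (0:ℂ) 1, z ≠ 0 →
      C * ((1 - ‖z‖) / (1 + ‖z‖)) ≤
        ‖z * (1 / f z
            - ∑ n, (1 / ((|m n| : ℝ) : ℂ)) * (1 / (2 * z) - 1 / (z - ζ n)))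
          - Complex.I * (((1 / p 0).im : ℝ) : ℂ)‖ ∧
      ‖z * (1 / f z
            - ∑ n, (1 / ((|m n| : ℝ) : ℂ)) * (1 / (2 * z) - 1 / (z - ζ n)))
          - Complex.I * (((1 / p 0).im : ℝ) : ℂ)‖ ≤
        C * ((1 + ‖z‖) / (1 - ‖z‖)) :=
  stmt12_general N p f hp hre hf ζ hinj hζ m hm hder C hC
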